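/- arXiv:2210.09350 — 2 statements merged into one kernel-verified Lean document; each statement's English description precedes it below -/
import Mathlib

section
/- If r is a square root on a pseudo MV-algebra M, then r(x ∨ y) = r(x) ∨ r(y) for all x, y ∈ M. -/
/-- A pseudo MV-algebra `(M; ⊕, ⁻, ∼, 0, 1)` satisfying axioms (A1)–(A8),
with `x ⊙ y := (y⁻ ⊕ x⁻)∼`. -/
class PseudoMV (M : Type*) where
  oplus : M → M → M
  lneg : M → M
  rneg : M → M
  zero : M
  one : M
  oplus_assoc : ∀ x y z : M, oplus x (oplus y z) = oplus (oplus x y) z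
  oplus_zero : ∀ x : M, oplus x zero = x
  zero_oplus : ∀ x : M, oplus zero x = x
  oplus_one : ∀ x : M, oplus x one = one
  one_oplus : ∀ x : M, oplus one x = one
  lneg_one : lneg one = zero
  rneg_one : rneg one = zero
  a5 : ∀ x y : M, rneg (oplus (lneg x) (lneg y)) = lneg (oplus (rneg x) (rneg y))
  a6₁ : ∀ x y : M,
    oplus x (rneg (oplus (lneg y) (lneg (rneg x)))) =
      oplus y (rneg (oplus (lneg x) (lneg (rneg y))))
  a6₂ : ∀ x y : M,
    oplus x (rneg (oplus (lneg y) (lneg (rneg x)))) =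
      oplus (rneg (oplus (lneg (lneg y)) (lneg x))) y
  a6₃ : ∀ x y : M,
    oplus x (rneg (oplus (lneg y) (lneg (rneg x)))) =
      oplus (rneg (oplus (lneg (lneg x)) (lneg y))) x
  a7 : ∀ x y : M,
    rneg (oplus (lneg (oplus (lneg x) y)) (lneg x)) =
      rneg (oplus (lneg y) (lneg (oplus x (rneg y))))
  a8 : ∀ x : M, rneg (lneg x) = x

namespace PseudoMV

variable {M : Type*} [PseudoMV M]

/-- `x ⊙ y := (y⁻ ⊕ x⁻)∼`. -/
def mul (x y : M) : M := rneg (oplus (lneg y) (lneg x))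

/-- `x ∨ y = x ⊕ (x∼ ⊙ y)` (axiom (A6)). -/
def sup (x y : M) : M := oplus x (mul (rneg x) y)

/-- `x ∧ y = x ⊙ (x⁻ ⊕ y)` (axiom (A7)). -/
def inf (x y : M) : M := mul x (oplus (lneg x) y)

/-- The lattice order of a pseudo MV-algebra. -/
def le (x y : M) : Prop := sup x y = y

/-- `x → y := x⁻ ⊕ y`. -/
def arrow (x y : M) : M := oplus (lneg x) y

/-- `x ⇝ y := y ⊕ x∼`. -/
def squig (x y : M) : M := oplus y (rneg x)

/-- A weak square root: (Sq1) and (Sq2). -/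
def IsWeakSqrt (r : M → M) : Prop :=
  (∀ x : M, mul (r x) (r x) = x) ∧
  (∀ x y : M, le (mul y y) x → le y (r x))

/-- A square root: (Sq1), (Sq2) and (Sq3). -/
def IsSqrt (r : M → M) : Prop :=
  IsWeakSqrt r ∧
  (∀ x : M, r (lneg x) = arrow (r x) (r zero) ∧ r (rneg x) = squig (r x) (r zero))

end PseudoMV

open PseudoMV

/-! In the order `x ≤ y ↔ x ∨ y = y` a pseudo MV-algebra is a distributive lattice in
which `⊙` distributes over `∨` and `∧`, and `⊕` distributes over `∨`. By (Sq1) and (Sq2) a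
square root is monotone and preserves `∧`: `s = r x ∧ r y` satisfies `s ⊙ s ≤ x ∧ y`.
Writing `x ∨ y = (x∼ ∧ y∼)⁻`, (Sq3) then gives
`r (x ∨ y) = (r x∼ ∧ r y∼)⁻ ⊕ r 0 = ((r x∼)⁻ ⊕ r 0) ∨ ((r y∼)⁻ ⊕ r 0) = r x ∨ r y`. -/

namespace PseudoMV

variable {M : Type*} [PseudoMV M]

theorem lneg_rneg (x : M) : lneg (rneg x) = x := by
  simpa only [lneg_one, rneg_one, oplus_zero, a8] using (a5 x one).symm

theorem lneg_zero : lneg (zero : M) = one := by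
  rw [← rneg_one, lneg_rneg]

theorem lneg_mul (x y : M) : lneg (mul x y) = oplus (lneg y) (lneg x) :=
  lneg_rneg _

theorem rneg_mul (x y : M) : rneg (mul x y) = oplus (rneg y) (rneg x) := by
  rw [mul, a5, a8]

theorem lneg_oplus (x y : M) : lneg (oplus x y) = mul (lneg y) (lneg x) := by
  rw [mul, a5, a8, a8]

theorem rneg_oplus (x y : M) : rneg (oplus x y) = mul (rneg y) (rneg x) := by
  rw [mul, lneg_rneg, lneg_rneg]

theorem mul_lneg_self (x : M) : mul x (lneg x) = zero := by
  simpa only [mul, oplus_zero, lneg_zero, one_oplus, rneg_one] using a7 x zero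

theorem lneg_oplus_self (x : M) : oplus (lneg x) x = one := by
  simpa only [lneg_mul, lneg_zero, lneg_rneg] using congrArg lneg (mul_lneg_self (rneg x))

theorem oplus_rneg_self (x : M) : oplus x (rneg x) = one := by
  simpa only [lneg_rneg] using lneg_oplus_self (rneg x)

protected theorem mul_one (x : M) : mul x one = x := by
  rw [mul, lneg_one, zero_oplus, a8]

protected theorem one_mul (x : M) : mul one x = x := by
  rw [mul, lneg_one, oplus_zero, a8]

protected theorem sup_comm (x y : M) : sup x y = sup y x := a6₁ x y

theorem sup_eq_mul_lneg_oplus (x y : M) : sup x y = oplus (mul x (lneg y)) y := a6₂ x y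

theorem inf_eq_mul_oplus_rneg (x y : M) : inf x y = mul (oplus x (rneg y)) y := a7 x y

instance : LE M := ⟨le⟩

theorem le_iff_lneg_oplus_eq_one {x y : M} : x ≤ y ↔ oplus (lneg x) y = one := by
  refine ⟨fun h => ?_, fun h => ?_⟩
  · rw [← show sup x y = y from h, sup, oplus_assoc, lneg_oplus_self, one_oplus]
  · show sup x y = y
    rw [PseudoMV.sup_comm, sup, mul, lneg_rneg, h, rneg_one, oplus_zero]

theorem le_iff_oplus_rneg_eq_one {x y : M} : x ≤ y ↔ oplus y (rneg x) = one := by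
  refine ⟨fun h => ?_, fun h => ?_⟩
  · rw [← show sup x y = y from h, PseudoMV.sup_comm, sup_eq_mul_lneg_oplus, ← oplus_assoc,
      oplus_rneg_self, oplus_one]
  · show sup x y = y
    rw [sup_eq_mul_lneg_oplus, mul, a5, a8, h, lneg_one, zero_oplus]

instance : PartialOrder M where
  le_refl x := le_iff_lneg_oplus_eq_one.mpr (lneg_oplus_self x)
  le_trans x y z hxy hyz := by
    rw [le_iff_lneg_oplus_eq_one, ← show sup y z = z from hyz, sup, oplus_assoc,
      le_iff_lneg_oplus_eq_one.mp hxy, one_oplus]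
  le_antisymm x y hxy hyx :=
    (show sup y x = x from hyx).symm.trans ((PseudoMV.sup_comm y x).trans hxy)

theorem lneg_le_lneg_iff {x y : M} : lneg x ≤ lneg y ↔ y ≤ x := by
  rw [le_iff_oplus_rneg_eq_one, a8, le_iff_lneg_oplus_eq_one]

theorem rneg_le_rneg_iff {x y : M} : rneg x ≤ rneg y ↔ y ≤ x := by
  rw [le_iff_lneg_oplus_eq_one, lneg_rneg, le_iff_oplus_rneg_eq_one]

theorem mul_le_iff_le_lneg_oplus {x y z : M} : mul x y ≤ z ↔ y ≤ oplus (lneg x) z := by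
  rw [le_iff_lneg_oplus_eq_one, le_iff_lneg_oplus_eq_one, lneg_mul, ← oplus_assoc]

theorem mul_le_iff_le_oplus_rneg {x y z : M} : mul x y ≤ z ↔ x ≤ oplus z (rneg y) := by
  rw [le_iff_oplus_rneg_eq_one, le_iff_oplus_rneg_eq_one, rneg_mul, oplus_assoc]

protected theorem le_sup_left (x y : M) : x ≤ sup x y := by
  rw [le_iff_lneg_oplus_eq_one, sup, oplus_assoc, lneg_oplus_self, one_oplus]

protected theorem le_sup_right (x y : M) : y ≤ sup x y :=
  PseudoMV.sup_comm y x ▸ PseudoMV.le_sup_left y x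

theorem oplus_le_oplus_left {a b : M} (c : M) (h : a ≤ b) : oplus c a ≤ oplus c b := by
  rw [← lneg_le_lneg_iff, lneg_oplus, lneg_oplus, mul_le_iff_le_oplus_rneg, a8,
    ← sup_eq_mul_lneg_oplus]
  exact (lneg_le_lneg_iff.mpr h).trans (PseudoMV.le_sup_left _ _)

theorem oplus_le_oplus_right {a b : M} (c : M) (h : a ≤ b) : oplus a c ≤ oplus b c := by
  rw [← rneg_le_rneg_iff, rneg_oplus, rneg_oplus, mul_le_iff_le_lneg_oplus, lneg_rneg]
  exact (rneg_le_rneg_iff.mpr h).trans (PseudoMV.le_sup_right _ _)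

protected theorem mul_le_mul_left {a b : M} (c : M) (h : a ≤ b) : mul c a ≤ mul c b :=
  rneg_le_rneg_iff.mpr (oplus_le_oplus_right _ (lneg_le_lneg_iff.mpr h))

protected theorem mul_le_mul_right {a b : M} (c : M) (h : a ≤ b) : mul a c ≤ mul b c :=
  rneg_le_rneg_iff.mpr (oplus_le_oplus_left _ (lneg_le_lneg_iff.mpr h))

protected theorem sup_le {x y z : M} (hx : x ≤ z) (hy : y ≤ z) : sup x y ≤ z :=
  (show sup x z = z from hx) ▸ oplus_le_oplus_left x (PseudoMV.mul_le_mul_left _ hy)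

protected theorem inf_le_left (x y : M) : inf x y ≤ x := by
  rw [inf, mul_le_iff_le_oplus_rneg, le_iff_lneg_oplus_eq_one, oplus_assoc, lneg_oplus_self,
    one_oplus]

protected theorem inf_le_right (x y : M) : inf x y ≤ y :=
  mul_le_iff_le_lneg_oplus.mpr le_rfl

theorem inf_eq_rneg_sup (x y : M) : inf x y = rneg (sup (lneg x) (lneg y)) := by
  rw [PseudoMV.sup_comm, sup_eq_mul_lneg_oplus, rneg_oplus, rneg_mul, a8, a8, a8, inf]

protected theorem le_inf {x y z : M} (hx : z ≤ x) (hy : z ≤ y) : z ≤ inf x y := by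
  rw [← a8 z, inf_eq_rneg_sup, rneg_le_rneg_iff]
  exact PseudoMV.sup_le (lneg_le_lneg_iff.mpr hx) (lneg_le_lneg_iff.mpr hy)

instance : Lattice M where
  sup := sup
  inf := inf
  le_sup_left := PseudoMV.le_sup_left
  le_sup_right := PseudoMV.le_sup_right
  sup_le _ _ _ := PseudoMV.sup_le
  inf_le_left := PseudoMV.inf_le_left
  inf_le_right := PseudoMV.inf_le_right
  le_inf _ _ _ := PseudoMV.le_inf

theorem rneg_injective : Function.Injective (rneg : M → M) := fun x y h => by
  simpa only [lneg_rneg] using congrArg lneg h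

theorem rneg_sup (x y : M) : rneg (x ⊔ y) = rneg x ⊓ rneg y := by
  have h := (inf_eq_rneg_sup (rneg x) (rneg y)).symm
  rw [lneg_rneg, lneg_rneg] at h
  exact h

theorem lneg_inf (x y : M) : lneg (x ⊓ y) = lneg x ⊔ lneg y := by
  rw [← rneg_injective.eq_iff, rneg_sup, a8, a8, a8]

theorem lneg_oplus_mul (x y : M) : oplus (lneg x) (mul x y) = lneg x ⊔ y := by
  show _ = sup (lneg x) y
  rw [sup, a8]

protected theorem zero_le (x : M) : zero ≤ x := by
  rw [le_iff_lneg_oplus_eq_one, lneg_zero, one_oplus]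

theorem le_one (x : M) : x ≤ one :=
  le_iff_lneg_oplus_eq_one.mpr (oplus_one _)

theorem mul_le_left (x y : M) : mul x y ≤ x := by
  simpa only [PseudoMV.mul_one] using PseudoMV.mul_le_mul_left x (le_one y)

theorem mul_le_right (x y : M) : mul x y ≤ y := by
  simpa only [PseudoMV.one_mul] using PseudoMV.mul_le_mul_right y (le_one x)

theorem mul_lneg_oplus_of_le {x y : M} (h : y ≤ x) : mul x (oplus (lneg x) y) = y :=
  inf_eq_right.mpr h

theorem oplus_rneg_mul_of_le {x y : M} (h : x ≤ y) : mul (oplus x (rneg y)) y = x :=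
  (inf_eq_mul_oplus_rneg x y).symm.trans (inf_eq_left.mpr h)

protected theorem mul_sup (x y z : M) : mul x (y ⊔ z) = mul x y ⊔ mul x z := by
  refine le_antisymm (mul_le_iff_le_lneg_oplus.mpr (sup_le ?_ ?_)) (sup_le ?_ ?_)
  · exact mul_le_iff_le_lneg_oplus.mp le_sup_left
  · exact mul_le_iff_le_lneg_oplus.mp le_sup_right
  · exact PseudoMV.mul_le_mul_left x le_sup_left
  · exact PseudoMV.mul_le_mul_left x le_sup_right

protected theorem inf_sup_le (x y z : M) : x ⊓ (y ⊔ z) ≤ x ⊓ y ⊔ x ⊓ z := by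
  set e := oplus (x ⊓ (y ⊔ z)) (rneg (y ⊔ z))
  have he : mul e (y ⊔ z) = x ⊓ (y ⊔ z) := oplus_rneg_mul_of_le inf_le_right
  have hle : ∀ w, w ≤ y ⊔ z → mul e w ≤ x ⊓ w := fun w hw =>
    le_inf ((PseudoMV.mul_le_mul_left e hw).trans (he ▸ inf_le_left)) (mul_le_right e w)
  calc x ⊓ (y ⊔ z) = mul e y ⊔ mul e z := by rw [← he, PseudoMV.mul_sup]
    _ ≤ x ⊓ y ⊔ x ⊓ z := sup_le_sup (hle y le_sup_left) (hle z le_sup_right)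

instance : DistribLattice M := DistribLattice.ofInfSupLe PseudoMV.inf_sup_le

protected theorem mul_inf (x y z : M) : mul x (y ⊓ z) = mul x y ⊓ mul x z := by
  refine le_antisymm (le_inf (PseudoMV.mul_le_mul_left x inf_le_left)
    (PseudoMV.mul_le_mul_left x inf_le_right)) ?_
  set d := mul x y ⊓ mul x z
  have hd : d ≤ x := inf_le_left.trans (mul_le_left x y)
  have hsum : oplus (lneg x) d ≤ lneg x ⊔ y ⊓ z := by
    rw [sup_inf_left, ← lneg_oplus_mul, ← lneg_oplus_mul]
    exact le_inf (oplus_le_oplus_left _ inf_le_left) (oplus_le_oplus_left _ inf_le_right)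
  calc d = mul x (oplus (lneg x) d) := (mul_lneg_oplus_of_le hd).symm
    _ ≤ mul x (lneg x ⊔ y ⊓ z) := PseudoMV.mul_le_mul_left x hsum
    _ = mul x (y ⊓ z) := by
      rw [PseudoMV.mul_sup, mul_lneg_self, sup_eq_right.mpr (PseudoMV.zero_le _)]

theorem sup_oplus (x y z : M) : oplus (x ⊔ y) z = oplus x z ⊔ oplus y z :=
  rneg_injective <| by
    rw [rneg_oplus, rneg_sup, PseudoMV.mul_inf, rneg_sup, rneg_oplus, rneg_oplus]

section Sqrt

variable {r : M → M}

theorem IsWeakSqrt.monotone (hr : IsWeakSqrt r) : Monotone r := fun x y h =>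
  hr.2 y (r x) ((hr.1 x).symm ▸ h)

theorem IsWeakSqrt.map_inf (hr : IsWeakSqrt r) (x y : M) : r (x ⊓ y) = r x ⊓ r y := by
  refine le_antisymm (hr.monotone.map_inf_le x y) (hr.2 _ _ ?_)
  have hsq : ∀ {a b : M}, a ≤ b → mul a a ≤ mul b b := fun h =>
    (PseudoMV.mul_le_mul_right _ h).trans (PseudoMV.mul_le_mul_left _ h)
  exact le_inf ((hsq inf_le_left).trans_eq (hr.1 x)) ((hsq inf_le_right).trans_eq (hr.1 y))

end Sqrt

end PseudoMV

theorem stmt3 {M : Type*} [PseudoMV M] (r : M → M) (hr : IsSqrt r) :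
    ∀ x y : M, r (sup x y) = sup (r x) (r y) := by
  intro x y
  have hr_lneg : ∀ z, r (lneg z) = oplus (lneg (r z)) (r zero) := fun z => (hr.2 z).1
  calc r (sup x y) = r (lneg (rneg x ⊓ rneg y)) := by rw [lneg_inf, lneg_rneg, lneg_rneg]; rfl
    _ = oplus (lneg (r (rneg x)) ⊔ lneg (r (rneg y))) (r zero) := by
      rw [hr_lneg, hr.1.map_inf, lneg_inf]
    _ = r (lneg (rneg x)) ⊔ r (lneg (rneg y)) := by rw [sup_oplus, hr_lneg, hr_lneg]
    _ = sup (r x) (r y) := by rw [lneg_rneg, lneg_rneg]; rfl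
end

section
/- Let M = Γ(G, u) be a linearly ordered symmetric pseudo MV-algebra with a square root r and r(0) > 0. Then for every x ∈ M the element (x + u)/2 exists in M and r(x) = (x + u)/2, where + is the group addition of G. In particular 2·r(0) = u. -/
/-!
For `x > 0`, `(Sq1)` reads `r x - u + r x = x`, and since `u` is central in `[0,u]` this is
`r x + r x = x + u`. At `x = 0` it only gives `2 • r 0 ≤ u`. If this were strict, put
`x₀ = u - 2 • r 0 > 0`: then `r x₀ = u - r 0` by uniqueness of halves, so `(Sq3)` at `x₀` gives
`r (2 • r 0) = u - r x₀ + r 0 = 2 • r 0`, and comparing with `2 • r (2 • r 0) = 2 • r 0 + u`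
yields `2 • r 0 = u` after all.
-/

section AddGroup

variable {G : Type*} [AddGroup G] {u x : G}

theorem addCommute_of_sub_eq_neg_add (h : u - x = -x + u) : AddCommute u x := by
  rw [sub_eq_add_neg] at h
  simpa using AddCommute.neg_right (b := -x) h

theorem AddCommute.sub_add_self (h : AddCommute u x) : x - u + x = x + x - u := by
  rw [sub_eq_add_neg, sub_eq_add_neg, add_assoc, h.neg_left.eq, add_assoc]

theorem AddCommute.sub_sub_cancel (h : AddCommute u x) : u - (u - x) = x := by
  rw [sub_sub_eq_add_sub, h.eq, add_sub_cancel_right]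

theorem AddCommute.sub_add_sub (h : AddCommute u x) : (u - x) + (u - x) = u - (x + x) + u := by
  simp only [sub_eq_add_neg, neg_add_rev, add_assoc]
  rw [h.neg_right.eq]

end AddGroup

section LinearOrderedAddGroup

variable {G : Type*} [AddGroup G] [LinearOrder G]

theorem add_self_injective [AddLeftMono G] [AddRightMono G] :
    Function.Injective fun x : G => x + x :=
  StrictMono.injective (f := fun x : G => x + x) fun _ _ h => add_lt_add h h

variable {u x y : G}

theorem add_self_eq_of_max_sub_add_self_eq (hc : AddCommute u y) (hx : 0 < x)
    (h : max (y - u + y) 0 = x) : y + y = x + u := by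
  rw [max_eq_left_iff.2 (le_of_not_ge fun h0 => hx.ne' (h.symm.trans (max_eq_right h0))),
    hc.sub_add_self] at h
  exact sub_eq_iff_eq_add.1 h

theorem add_self_le_of_max_sub_add_self_eq_zero [AddRightMono G] (hc : AddCommute u y)
    (h : max (y - u + y) 0 = 0) : y + y ≤ u := by
  rw [max_eq_right_iff, hc.sub_add_self] at h
  exact sub_nonpos.1 h

end LinearOrderedAddGroup

theorem stmt18_general {G : Type*} [AddGroup G] [LinearOrder G]
    [CovariantClass G G (· + ·) (· ≤ ·)]
    [CovariantClass G G (Function.swap (· + ·)) (· ≤ ·)]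
    (u : G) (hu : 0 ≤ u)
    (hsym : ∀ x : G, 0 ≤ x → x ≤ u → u - x = -x + u)
    (r : G → G)
    (hmap : ∀ x : G, 0 ≤ x → x ≤ u → 0 ≤ r x ∧ r x ≤ u)
    (sq1 : ∀ x : G, 0 ≤ x → x ≤ u → max (r x - u + r x) 0 = x)
    (sq3 : ∀ x : G, 0 ≤ x → x ≤ u →
      r (u - x) = min (u - r x + r 0) u ∧
      r (-x + u) = min (r 0 + (-(r x) + u)) u)
    (hpos : 0 < r 0) :
    (∀ x : G, 0 ≤ x → x ≤ u → r x + r x = x + u) ∧ r 0 + r 0 = u := by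
  have hcomm (x : G) (hx : 0 ≤ x) (hxu : x ≤ u) : AddCommute u (r x) :=
    addCommute_of_sub_eq_neg_add (hsym _ (hmap x hx hxu).1 (hmap x hx hxu).2)
  have hdouble (x : G) (hx : 0 < x) (hxu : x ≤ u) : r x + r x = x + u :=
    add_self_eq_of_max_sub_add_self_eq (hcomm x hx.le hxu) hx (sq1 x hx.le hxu)
  set a := r 0
  have ha : AddCommute u a := hcomm 0 le_rfl hu
  have haa : a + a ≤ u := add_self_le_of_max_sub_add_self_eq_zero ha (sq1 0 le_rfl hu)
  have hau : a + a = u := by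
    refine haa.eq_or_lt.resolve_right fun hlt => ?_
    set x₀ := u - (a + a)
    have hx₀ : 0 < x₀ := sub_pos.2 hlt
    have hx₀u : x₀ ≤ u := sub_le_self u (add_nonneg hpos.le hpos.le)
    have hb : r x₀ = u - a := add_self_injective <| (hdouble x₀ hx₀ hx₀u).trans ha.sub_add_sub.symm
    have hc : r (a + a) = a + a := by
      have h := (sq3 x₀ hx₀.le hx₀u).1
      rwa [(ha.add_right ha).sub_sub_cancel, hb, ha.sub_sub_cancel, min_eq_left haa] at h
    have h := hdouble (a + a) (add_pos hpos hpos) haa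
    rw [hc] at h
    exact hlt.ne (add_left_cancel h)
  refine ⟨fun x hx hxu => ?_, hau⟩
  rcases hx.eq_or_lt with rfl | hx
  · rwa [zero_add]
  · exact hdouble x hx hxu

/-- Let `M = Γ(G,u)` be a linearly ordered symmetric pseudo MV-algebra
(on the interval `[0,u]` of the linearly ordered unital ℓ-group `(G,u)`,
with `x ⊙ y = (x - u + y) ⊔ 0`, `x⁻ = u - x`, `x∼ = -x + u`, `x → y = (x⁻ + y) ⊓ u`,
`x ⇝ y = (y + x∼) ⊓ u`) with a square root `r` such that `r 0 > 0`. Then for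
every `x ∈ M` the element `(x+u)/2` exists in `M` and `r x = (x+u)/2`,
i.e. `r x + r x = x + u`; in particular `2 • r 0 = u`. -/
theorem stmt18 {G : Type*} [AddGroup G] [LinearOrder G]
    [CovariantClass G G (· + ·) (· ≤ ·)]
    [CovariantClass G G (Function.swap (· + ·)) (· ≤ ·)]
    (u : G) (hu : 0 ≤ u) (hstrong : ∀ g : G, ∃ n : ℕ, g ≤ n • u)
    (hsym : ∀ x : G, 0 ≤ x → x ≤ u → u - x = -x + u)
    (r : G → G)
    (hmap : ∀ x : G, 0 ≤ x → x ≤ u → 0 ≤ r x ∧ r x ≤ u)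
    (sq1 : ∀ x : G, 0 ≤ x → x ≤ u → max (r x - u + r x) 0 = x)
    (sq2 : ∀ x y : G, 0 ≤ x → x ≤ u → 0 ≤ y → y ≤ u →
      max (y - u + y) 0 ≤ x → y ≤ r x)
    (sq3 : ∀ x : G, 0 ≤ x → x ≤ u →
      r (u - x) = min (u - r x + r 0) u ∧
      r (-x + u) = min (r 0 + (-(r x) + u)) u)
    (hpos : 0 < r 0) :
    (∀ x : G, 0 ≤ x → x ≤ u → r x + r x = x + u) ∧ r 0 + r 0 = u :=
  stmt18_general u hu hsym r hmap sq1 sq3 hpos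
end
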